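/- Let n ≥ 2 and i : Fin n. Neither of the (n+1)-qubit dictatorship states Δ⁺_i (with Δ⁺_i(s) = 2^(−n/2) if s(Fin.last n) = s(i), else 0) nor Δ⁻_i (with s(Fin.last n) = ¬ s(i)) is logically contextual for any choice of dichotomic measurements: for every assignment to each of the n+1 parties of two measurements given by orthonormal bases of Bool → ℂ, every context c : Fin (n+1) → M, and every outcome o with nonzero amplitude in c, there exists a consistent global assignment g with g k (c k) = o k for all k. -/
import Mathlib


noncomputable section

/-- Inner product of two `m`-qubit states `(Fin m → Bool) → ℂ`. -/
def inner' {m : ℕ} (φ ψ : (Fin m → Bool) → ℂ) : ℂ :=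
  ∑ s : Fin m → Bool, (starRingEnd ℂ) (φ s) * ψ s

/-- Tensor product of local vectors. -/
def tensor {m : ℕ} (v : Fin m → Bool → ℂ) : (Fin m → Bool) → ℂ :=
  fun s => ∏ i, v i (s i)

/-- Standard inner product on `Bool → ℂ`. -/
def inner1 (u w : Bool → ℂ) : ℂ := ∑ b, (starRingEnd ℂ) (u b) * w b

/-- `(u, w)` form an orthonormal basis of `Bool → ℂ`. -/
def OrthonormalPair (u w : Bool → ℂ) : Prop :=
  inner1 u u = 1 ∧ inner1 w w = 1 ∧ inner1 u w = 0

/-- The `(n+1)`-qubit dictatorship state `Δ⁺ᵢ`: the last qubit equals qubit `i`. -/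
def DeltaPN (n : ℕ) (i : Fin n) : (Fin (n + 1) → Bool) → ℂ :=
  fun s => if s (Fin.last n) = s i.castSucc then (Real.sqrt (2 ^ n) : ℂ)⁻¹ else 0

/-- The `(n+1)`-qubit dictatorship state `Δ⁻ᵢ`: the last qubit is the negation
of qubit `i`. -/
def DeltaMN (n : ℕ) (i : Fin n) : (Fin (n + 1) → Bool) → ℂ :=
  fun s => if s (Fin.last n) = !(s i.castSucc) then (Real.sqrt (2 ^ n) : ℂ)⁻¹ else 0

namespace DictAux

lemma inner1_conj (u w : Bool → ℂ) : inner1 u w = (starRingEnd ℂ) (inner1 w u) := by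
  simp [inner1, map_mul, mul_comm]

/-- completeness relation -/
lemma complete (x : Bool → Bool → ℂ) (hx : OrthonormalPair (x false) (x true)) (b b' : Bool) :
    (∑ a, (starRingEnd ℂ) (x a b) * x a b') = if b = b' then 1 else 0 := by
  obtain ⟨h1, h2, h3⟩ := hx
  have h4 : inner1 (x true) (x false) = 0 := by rw [inner1_conj, h3, map_zero]
  have key : ∀ a a' : Bool, (∑ bb, x a bb * star (x a' bb)) = (starRingEnd ℂ) (inner1 (x a) (x a')) := by
    intro a a'
    rw [inner1, map_sum]
    congr 1; ext bb
    rw [map_mul, starRingEnd_apply, starRingEnd_apply, star_star]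
    rfl
  have hMM : (Matrix.of x) * (Matrix.of x).conjTranspose = 1 := by
    ext a a'
    rw [Matrix.mul_apply]
    simp only [Matrix.conjTranspose_apply, Matrix.of_apply]
    rw [key a a']
    cases a <;> cases a' <;> simp [Matrix.one_apply, h1, h2, h3, h4]
  have hMM' : (Matrix.of x).conjTranspose * (Matrix.of x) = 1 := mul_eq_one_comm.mp hMM
  have h5 := congrFun (congrFun hMM' b) b'
  rw [Matrix.mul_apply] at h5
  simp only [Matrix.conjTranspose_apply, Matrix.one_apply, Matrix.of_apply] at h5
  exact h5

/-- expansion in an orthonormal basis -/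
lemma expand (x : Bool → Bool → ℂ) (hx : OrthonormalPair (x false) (x true))
    (y : Bool → ℂ) (b : Bool) :
    y b = ∑ a, inner1 (x a) y * x a b := by
  have h : ∑ a, inner1 (x a) y * x a b
      = ∑ b', y b' * ∑ a, (starRingEnd ℂ) (x a b') * x a b := by
    simp only [inner1, Finset.sum_mul, Finset.mul_sum]
    rw [Finset.sum_comm]
    congr 1; ext b'; congr 1; ext a; ring
  have hc : ∀ b', (∑ a, (starRingEnd ℂ) (x a b') * x a b) = if b' = b then 1 else 0 :=
    fun b' => complete x hx b' b
  rw [h]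
  simp only [hc]
  rw [Fintype.sum_bool]
  cases b <;> simp

lemma notBothZero (x : Bool → Bool → ℂ) (hx : OrthonormalPair (x false) (x true))
    (y : Bool → ℂ) (hy : inner1 y y = 1) :
    ¬ (inner1 (x false) y = 0 ∧ inner1 (x true) y = 0) := by
  rintro ⟨h0, h1⟩
  have hz : ∀ b, y b = 0 := by
    intro b
    rw [expand x hx y b, Fintype.sum_bool, h0, h1]
    ring
  rw [inner1] at hy
  simp [hz] at hy

lemma colinear (x : Bool → Bool → ℂ) (hx : OrthonormalPair (x false) (x true))
    (y : Bool → ℂ) (z : Bool) (h : inner1 (x z) y = 0) (b : Bool) :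
    y b = inner1 (x (!z)) y * x (!z) b := by
  rw [expand x hx y b, Fintype.sum_bool]
  cases z <;> simp only [Bool.not_false, Bool.not_true] <;> rw [h] <;> ring

lemma onp_conj_xor (e : Bool) (u w : Bool → ℂ) (h : OrthonormalPair u w) :
    OrthonormalPair (fun b => (starRingEnd ℂ) (u (xor b e)))
      (fun b => (starRingEnd ℂ) (w (xor b e))) := by
  obtain ⟨h1, h2, h3⟩ := h
  have h3' : inner1 w u = 0 := by rw [inner1_conj, h3, map_zero]
  refine ⟨?_, ?_, ?_⟩ <;> cases e <;>
    simp only [inner1, Fintype.sum_bool, Complex.conj_conj, Bool.xor_false, Bool.xor_true,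
      Bool.not_true, Bool.not_false] at h1 h2 h3' ⊢
  · linear_combination h1
  · linear_combination h1
  · linear_combination h2
  · linear_combination h2
  · linear_combination h3'
  · linear_combination h3'

lemma sumNonzero (u w : Bool → ℂ) (h : OrthonormalPair u w) :
    (∑ b, (starRingEnd ℂ) (u b)) ≠ 0 ∨ (∑ b, (starRingEnd ℂ) (w b)) ≠ 0 := by
  by_contra hc
  push_neg at hc
  obtain ⟨h0, h1⟩ := hc
  set x : Bool → Bool → ℂ := fun a => cond a w u with hx
  have hone := expand x h (fun _ => (1 : ℂ)) true
  rw [Fintype.sum_bool] at hone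
  have hxf : inner1 (x false) (fun _ => (1 : ℂ)) = 0 := by
    simpa [inner1, hx] using h0
  have hxt : inner1 (x true) (fun _ => (1 : ℂ)) = 0 := by
    simpa [inner1, hx] using h1
  rw [hxf, hxt] at hone
  simp at hone

lemma bell (x y : Bool → Bool → Bool → ℂ)
    (hx : ∀ m, OrthonormalPair (x m false) (x m true))
    (hy : ∀ m, OrthonormalPair (y m false) (y m true))
    (m0 a0 m0' b0 : Bool)
    (h : inner1 (x m0 a0) (y m0' b0) ≠ 0) :
    ∃ A B : Bool → Bool, A m0 = a0 ∧ B m0' = b0 ∧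
      ∀ m m', inner1 (x m (A m)) (y m' (B m')) ≠ 0 := by
  classical
  have hxu : ∀ m a, inner1 (x m a) (x m a) = 1 := by
    intro m a; cases a
    · exact (hx m).1
    · exact (hx m).2.1
  have hyu : ∀ m b, inner1 (y m b) (y m b) = 1 := by
    intro m b; cases b
    · exact (hy m).1
    · exact (hy m).2.1
  have rowNZ : ∀ m (Y : Bool → ℂ), inner1 Y Y = 1 → ∃ a, inner1 (x m a) Y ≠ 0 := by
    intro m Y hY
    by_contra hc
    push_neg at hc
    exact notBothZero (x m) (hx m) Y hY ⟨hc false, hc true⟩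
  have colNZ : ∀ m' (X : Bool → ℂ), inner1 X X = 1 → ∃ b, inner1 X (y m' b) ≠ 0 := by
    intro m' X hX
    by_contra hc
    push_neg at hc
    refine notBothZero (y m') (hy m') X hX ⟨?_, ?_⟩
    · rw [inner1_conj, hc false, map_zero]
    · rw [inner1_conj, hc true, map_zero]
  by_cases hz : ∃ z, inner1 (x (!m0) z) (y m0' b0) = 0
  · obtain ⟨z, hz0⟩ := hz
    have hl : inner1 (x (!m0) (!z)) (y m0' b0) ≠ 0 := by
      have hnb := notBothZero (x (!m0)) (hx (!m0)) (y m0' b0) (hyu m0' b0)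
      cases z
      · simp only [Bool.not_false]
        intro h1; exact hnb ⟨hz0, h1⟩
      · simp only [Bool.not_true]
        intro h1; exact hnb ⟨h1, hz0⟩
    have hcol1 : ∀ b, y m0' b0 b = inner1 (x (!m0) (!z)) (y m0' b0) * x (!m0) (!z) b :=
      colinear (x (!m0)) (hx (!m0)) (y m0' b0) z hz0
    by_cases hz' : ∃ z', inner1 (x (!m0) (!z)) (y (!m0') z') = 0
    · obtain ⟨z', hz'0⟩ := hz'
      have hmu : inner1 (x (!m0) (!z)) (y (!m0') (!z')) ≠ 0 := by
        have hnb := notBothZero (y (!m0')) (hy (!m0')) (x (!m0) (!z)) (hxu (!m0) (!z))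
        cases z'
        · simp only [Bool.not_false]
          intro h1
          exact hnb ⟨(by rw [inner1_conj, hz'0, map_zero]), (by rw [inner1_conj, h1, map_zero])⟩
        · simp only [Bool.not_true]
          intro h1
          exact hnb ⟨(by rw [inner1_conj, h1, map_zero]), (by rw [inner1_conj, hz'0, map_zero])⟩
      have hcol2 : ∀ b, x (!m0) (!z) b
          = inner1 (y (!m0') (!z')) (x (!m0) (!z)) * y (!m0') (!z') b :=
        colinear (y (!m0')) (hy (!m0')) (x (!m0) (!z)) z'
          (by rw [inner1_conj, hz'0, map_zero])
      set lc := inner1 (x (!m0) (!z)) (y m0' b0) with hlc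
      set mu := inner1 (y (!m0') (!z')) (x (!m0) (!z)) with hmu'
      have e3 : ∀ b, y m0' b0 b = lc * mu * y (!m0') (!z') b := by
        intro b; rw [hcol1 b, hcol2 b]; ring
      have key : inner1 (x m0 a0) (y (!m0') (!z')) ≠ 0 := by
        intro h0
        apply h
        have : inner1 (x m0 a0) (y m0' b0)
            = lc * mu * inner1 (x m0 a0) (y (!m0') (!z')) := by
          rw [inner1, inner1, Finset.mul_sum]
          refine Finset.sum_congr rfl fun b _ => by rw [e3 b]; ring
        rw [this, h0, mul_zero]
      refine ⟨fun m => if m = m0 then a0 else !z, fun m' => if m' = m0' then b0 else !z',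
        by simp, by simp, ?_⟩
      intro m m'
      have hm : m = m0 ∨ m = !m0 := by cases m <;> cases m0 <;> simp
      have hm' : m' = m0' ∨ m' = !m0' := by cases m' <;> cases m0' <;> simp
      have hne : (!m0) ≠ m0 := by cases m0 <;> simp
      have hne' : (!m0') ≠ m0' := by cases m0' <;> simp
      rcases hm with rfl | rfl <;> rcases hm' with rfl | rfl <;>
        simp only [if_pos rfl, if_neg hne, if_neg hne'] <;> simp [hne, hne']
      · exact h
      · exact key
      · exact hl
      · exact hmu
    · push_neg at hz'
      obtain ⟨b1, hb1⟩ := colNZ (!m0') (x m0 a0) (hxu m0 a0)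
      refine ⟨fun m => if m = m0 then a0 else !z, fun m' => if m' = m0' then b0 else b1,
        by simp, by simp, ?_⟩
      intro m m'
      have hm : m = m0 ∨ m = !m0 := by cases m <;> cases m0 <;> simp
      have hm' : m' = m0' ∨ m' = !m0' := by cases m' <;> cases m0' <;> simp
      have hne : (!m0) ≠ m0 := by cases m0 <;> simp
      have hne' : (!m0') ≠ m0' := by cases m0' <;> simp
      rcases hm with rfl | rfl <;> rcases hm' with rfl | rfl <;>
        simp only [if_pos rfl, if_neg hne, if_neg hne'] <;> simp [hne, hne']
      · exact h
      · exact hb1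
      · exact hl
      · exact hz' b1
  · push_neg at hz
    obtain ⟨b1, hb1⟩ := colNZ (!m0') (x m0 a0) (hxu m0 a0)
    obtain ⟨a1, ha1⟩ := rowNZ (!m0) (y (!m0') b1) (hyu (!m0') b1)
    refine ⟨fun m => if m = m0 then a0 else a1, fun m' => if m' = m0' then b0 else b1,
      by simp, by simp, ?_⟩
    intro m m'
    have hm : m = m0 ∨ m = !m0 := by cases m <;> cases m0 <;> simp
    have hm' : m' = m0' ∨ m' = !m0' := by cases m' <;> cases m0' <;> simp
    have hne : (!m0) ≠ m0 := by cases m0 <;> simp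
    have hne' : (!m0') ≠ m0' := by cases m0' <;> simp
    rcases hm with rfl | rfl <;> rcases hm' with rfl | rfl <;>
      simp only [if_pos rfl, if_neg hne, if_neg hne'] <;> simp [hne, hne']
    · exact h
    · exact hb1
    · exact hz a1
    · exact ha1

lemma amp_factor (n : ℕ) (i : Fin n) (e : Bool) (V : Fin (n + 1) → Bool → ℂ) :
    inner' (tensor V) (fun s => if s (Fin.last n) = xor (s i.castSucc) e
        then (Real.sqrt (2 ^ n) : ℂ)⁻¹ else 0)
      = (Real.sqrt (2 ^ n) : ℂ)⁻¹ *
        ∏ j : Fin n, (if j = i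
          then ∑ b, (starRingEnd ℂ) (V j.castSucc b) *
            (starRingEnd ℂ) (V (Fin.last n) (xor b e))
          else ∑ b, (starRingEnd ℂ) (V j.castSucc b)) := by
  classical
  set K : ℂ := (Real.sqrt (2 ^ n) : ℂ)⁻¹ with hK
  set F : Fin n → Bool → ℂ := fun j b => (starRingEnd ℂ) (V j.castSucc b) *
    (if j = i then (starRingEnd ℂ) (V (Fin.last n) (xor b e)) else 1) with hF
  have htens : ∀ (t : Fin n → Bool) (b : Bool),
      tensor V (Fin.snoc t b) = (∏ j : Fin n, V j.castSucc (t j)) * V (Fin.last n) b := by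
    intro t b
    rw [tensor, Fin.prod_univ_castSucc]
    simp [Fin.snoc_castSucc, Fin.snoc_last]
  have step1 : inner' (tensor V) (fun s => if s (Fin.last n) = xor (s i.castSucc) e
        then K else 0)
      = ∑ t : Fin n → Bool, ∑ b : Bool, (starRingEnd ℂ) (tensor V (Fin.snoc t b)) *
        (if b = xor (t i) e then K else 0) := by
    rw [inner', ← Equiv.sum_comp (Fin.snocEquiv (fun _ => Bool)), Fintype.sum_prod_type,
      Finset.sum_comm]
    refine Finset.sum_congr rfl fun t _ => Finset.sum_congr rfl fun b _ => ?_
    have hsn : ((Fin.snocEquiv fun _ => Bool) (b, t)) = Fin.snoc t b := by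
      funext x
      simp [Fin.snocEquiv_apply]
    rw [hsn]
    simp [Fin.snoc_castSucc, Fin.snoc_last]
  have step2 : ∀ (f : Bool → ℂ) (X : Bool), (∑ b, f b * if b = X then K else 0) = f X * K := by
    intro f X; cases X <;> simp [Fintype.sum_bool]
  have step3 : ∀ t : Fin n → Bool, (∏ j, F j (t j))
      = (∏ j : Fin n, (starRingEnd ℂ) (V j.castSucc (t j))) *
        (starRingEnd ℂ) (V (Fin.last n) (xor (t i) e)) := by
    intro t
    rw [hF, Finset.prod_mul_distrib]
    congr 1
    rw [Finset.prod_ite_eq' Finset.univ i (fun j => (starRingEnd ℂ) (V (Fin.last n) (xor (t j) e)))]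
    simp
  rw [step1]
  calc (∑ t : Fin n → Bool, ∑ b : Bool, (starRingEnd ℂ) (tensor V (Fin.snoc t b)) *
        (if b = xor (t i) e then K else 0))
      = ∑ t : Fin n → Bool, (∏ j, F j (t j)) * K := by
        refine Finset.sum_congr rfl fun t _ => ?_
        rw [step2 (fun b => (starRingEnd ℂ) (tensor V (Fin.snoc t b))) (xor (t i) e)]
        rw [htens, map_mul, map_prod, step3]
    _ = K * ∑ t : Fin n → Bool, ∏ j, F j (t j) := by
        rw [Finset.mul_sum]
        refine Finset.sum_congr rfl fun t _ => mul_comm _ _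
    _ = K * ∏ j : Fin n, ∑ b, F j b := by
        rw [← Fintype.piFinset_univ, ← Finset.prod_univ_sum]
    _ = K * ∏ j : Fin n, (if j = i
          then ∑ b, (starRingEnd ℂ) (V j.castSucc b) *
            (starRingEnd ℂ) (V (Fin.last n) (xor b e))
          else ∑ b, (starRingEnd ℂ) (V j.castSucc b)) := by
        congr 1
        refine Finset.prod_congr rfl fun j _ => ?_
        by_cases hj : j = i
        · subst hj; simp [hF]
        · simp [hF, hj]

end DictAux

/-- For `n ≥ 2`, neither `(n+1)`-qubit dictatorship state is logically
contextual for any choice of dichotomic measurements (two orthonormal bases per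
party, the measurement set being `Bool`): every possible outcome of every
context extends to a consistent global assignment. -/
theorem dictatorship_not_logically_contextual_n (n : ℕ) (hn : 2 ≤ n) (i : Fin n)
    (ψ : (Fin (n + 1) → Bool) → ℂ) (hψ : ψ = DeltaPN n i ∨ ψ = DeltaMN n i)
    (v : Fin (n + 1) → Bool → Bool → Bool → ℂ)
    (hv : ∀ k m, OrthonormalPair (v k m false) (v k m true))
    (c : Fin (n + 1) → Bool) (o : Fin (n + 1) → Bool)
    (ho : inner' (tensor fun k => v k (c k) (o k)) ψ ≠ 0) :
    ∃ g : Fin (n + 1) → Bool → Bool,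
      (∀ c' : Fin (n + 1) → Bool,
        inner' (tensor fun k => v k (c' k) (g k (c' k))) ψ ≠ 0) ∧
      ∀ k, g k (c k) = o k := by
  classical
  obtain ⟨e, hψe⟩ : ∃ e : Bool, ψ = fun s =>
      if s (Fin.last n) = xor (s i.castSucc) e then (Real.sqrt (2 ^ n) : ℂ)⁻¹ else 0 := by
    rcases hψ with h | h
    · exact ⟨false, by rw [h]; funext s; simp [DeltaPN]⟩
    · exact ⟨true, by rw [h]; funext s; simp [DeltaMN]⟩
  subst hψe
  have hC : (Real.sqrt (2 ^ n) : ℂ)⁻¹ ≠ 0 := by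
    apply inv_ne_zero
    have : Real.sqrt (2 ^ n) ≠ 0 := by positivity
    exact_mod_cast Complex.ofReal_ne_zero.mpr this
  rw [DictAux.amp_factor n i e] at ho
  have hfac := Finset.prod_ne_zero_iff.mp (mul_ne_zero_iff.mp ho).2
  set x : Bool → Bool → Bool → ℂ := fun m a => v i.castSucc m a with hx
  set y : Bool → Bool → Bool → ℂ :=
    fun m b b' => (starRingEnd ℂ) (v (Fin.last n) m b (xor b' e)) with hy
  have hxON : ∀ m, OrthonormalPair (x m false) (x m true) := fun m => hv i.castSucc m
  have hyON : ∀ m, OrthonormalPair (y m false) (y m true) :=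
    fun m => DictAux.onp_conj_xor e _ _ (hv (Fin.last n) m)
  have hIN : ∀ (mi a ml b : Bool), inner1 (x mi a) (y ml b)
      = ∑ b', (starRingEnd ℂ) (v i.castSucc mi a b') *
          (starRingEnd ℂ) (v (Fin.last n) ml b (xor b' e)) := by
    intro mi a ml b; rfl
  have hseed : inner1 (x (c i.castSucc) (o i.castSucc))
      (y (c (Fin.last n)) (o (Fin.last n))) ≠ 0 := by
    have hh := hfac i (Finset.mem_univ i)
    rw [if_pos rfl] at hh
    rw [hIN]; exact hh
  obtain ⟨A, B, hA0, hB0, hAB⟩ := DictAux.bell x y hxON hyON _ _ _ _ hseed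
  have hpick : ∀ (j : Fin n), j ≠ i → ∀ m : Bool, ∃ a : Bool,
      (m = c j.castSucc → a = o j.castSucc) ∧
      (∑ b, (starRingEnd ℂ) (v j.castSucc m a b)) ≠ 0 := by
    intro j hj m
    by_cases hm : m = c j.castSucc
    · refine ⟨o j.castSucc, fun _ => rfl, ?_⟩
      have hh := hfac j (Finset.mem_univ j)
      rw [if_neg hj] at hh
      rw [hm]; exact hh
    · rcases DictAux.sumNonzero _ _ (hv j.castSucc m) with h' | h'
      · exact ⟨false, fun hh => absurd hh hm, h'⟩
      · exact ⟨true, fun hh => absurd hh hm, h'⟩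
  choose P hP1 hP2 using hpick
  set G : Fin n → Bool → Bool := fun j => if hj : j = i then A else P j hj with hG
  refine ⟨Fin.snoc G B, ?_, ?_⟩
  · intro c'
    rw [DictAux.amp_factor n i e]
    refine mul_ne_zero hC ?_
    rw [Finset.prod_ne_zero_iff]
    intro j _
    by_cases hj : j = i
    · rw [if_pos hj]
      subst hj
      have hgj : (Fin.snoc (α := fun _ : Fin (n+1) => Bool → Bool) G B) j.castSucc = A := by
        rw [Fin.snoc_castSucc, hG]; simp
      have hgl : (Fin.snoc (α := fun _ : Fin (n+1) => Bool → Bool) G B) (Fin.last n) = B :=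
        Fin.snoc_last _ _
      simp only [hgj, hgl]
      rw [← hIN]
      exact hAB _ _
    · rw [if_neg hj]
      have hgj : (Fin.snoc (α := fun _ : Fin (n+1) => Bool → Bool) G B) j.castSucc = P j hj := by
        rw [Fin.snoc_castSucc, hG]; simp [hj]
      simp only [hgj]
      exact hP2 j hj (c' j.castSucc)
  · intro k
    refine Fin.lastCases ?_ ?_ k
    · rw [Fin.snoc_last]; exact hB0
    · intro j
      rw [Fin.snoc_castSucc]
      by_cases hj : j = i
      · subst hj
        rw [hG]; simpa using hA0
      · rw [hG]
        simp only [dif_neg hj]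
        exact hP1 j hj _ rfl
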